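/- arXiv:2506.10830 — 2 statements merged into one kernel-verified Lean document; each statement's English description precedes it below -/
import Mathlib

section
/- If (W, H, W_+, Q_+, σ) is a Moody–Pianzola triangular decomposition of the Witt algebra W, then H = ℂL_0, W_+ = ⊕_{n∈ℕ} ℂL_{−n} (up to swapping ±), Q_+ ≅ ℕ, and σ(L_n) = λⁿ L_{−n} for some λ ∈ ℂ*. -/
/-- The `α`-weight space of a subalgebra `H` acting on `g` by the adjoint
action: `{v | ⁅h, v⁆ = α h • v for all h ∈ H}`. -/
def wtSpace {g : Type*} [LieRing g] [LieAlgebra ℂ g] (H : LieSubalgebra ℂ g)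
    (α : Module.Dual ℂ H) : Submodule ℂ g where
  carrier := {v | ∀ h : H, ⁅(h : g), v⁆ = α h • v}
  add_mem' := fun ha hb h => by rw [lie_add, ha h, hb h, smul_add]
  zero_mem' := fun h => by simp
  smul_mem' := fun t v hv h => by rw [lie_smul, hv h, smul_comm]

/-!
Every `h ∈ H` is ad-diagonalizable: `W₊` is a sum of `H`-weight spaces, `H` is abelian, and the
anti-involution `σ`, which fixes `h`, carries the `μ`-eigenspace of `ad h` onto the
`(-μ)`-eigenspace, so it takes care of `W₋ = σ W₊`. In the Witt algebra only the multiples of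
`L 0` are ad-diagonalizable: if the top degree `N` of `h` were positive, the top-degree term of
`⁅h, v⁆` could not cancel for an eigenvector `v` of degree `> N`, so no eigenvector would reach
degree `N + 1` (and symmetrically for the bottom degree). Hence `H = ℂ L 0`, and all weight
vectors are multiples of single `L j`.

Then `σ (L j) = c j • L (-j)`, and applying `σ` to `⁅L m, L n⁆` gives `c (m + n) = c m * c n` for
`m ≠ n`, which forces `c j = λ ^ j`. The set `T = {j | L j ∈ W₊}` avoids `-T` (the sum is direct),
covers `ℤ ∖ {0}` together with `-T`, and contains `j + k` for distinct `j, k ∈ T`; such a set is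
`ℤ_{>0}` or `ℤ_{<0}`. Finally `H*` is one-dimensional, so the linearly independent generators of
`Q₊` reduce to a single `β ≠ 0` and `Q₊ = ℕ⁺ • β`.
-/

open Module
open scoped Pointwise

theorem eq_zpow_of_map_add_of_ne {G₀ : Type*} [CommGroupWithZero G₀] {f : ℤ → G₀} (h0 : f 0 = 1)
    (hadd : ∀ m n, m ≠ n → f (m + n) = f m * f n) (n : ℤ) : f n = f 1 ^ n := by
  have hneg : ∀ n, n ≠ 0 → f (-n) = (f n)⁻¹ := fun n hn =>
    eq_inv_of_mul_eq_one_left (by rw [← hadd _ _ (by omega), neg_add_cancel, h0])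
  have hf1 : f 1 ≠ 0 :=
    right_ne_zero_of_mul_eq_one (a := f (-1)) (by rw [← hadd (-1) 1 (by decide)]; norm_num [h0])
  -- `2 = 1 + 1` is excluded, but `1 = 2 + (-1)` is not
  have h2 : f 2 = f 1 ^ 2 := by
    have := hadd 2 (-1) (by decide)
    rw [hneg 1 one_ne_zero, show (2 : ℤ) + -1 = 1 by norm_num, eq_mul_inv_iff_mul_eq₀ hf1] at this
    rw [sq, this]
  have hnat : ∀ k : ℕ, f k = f 1 ^ k := by
    intro k
    induction k with
    | zero => simp [h0]
    | succ k ih =>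
      rcases eq_or_ne k 1 with rfl | hk
      · simpa using h2
      · rw [Nat.cast_succ, hadd k 1 (by exact_mod_cast hk), ih, pow_succ]
  obtain ⟨k, rfl | rfl⟩ := Int.eq_nat_or_neg n
  · simpa using hnat k
  · rcases eq_or_ne k 0 with rfl | hk
    · simp [h0]
    · rw [hneg _ (by exact_mod_cast hk), hnat, zpow_neg, zpow_natCast]

namespace Int

theorem eq_Ioi_zero_of_one_mem {T : Set ℤ} (hcover : ∀ k, k ≠ 0 → k ∈ T ∨ -k ∈ T)
    (hdisj : ∀ j ∈ T, -j ∉ T) (hadd : ∀ j ∈ T, ∀ k ∈ T, j ≠ k → j + k ∈ T) (h1 : 1 ∈ T) :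
    T = Set.Ioi 0 := by
  have h2 : (2 : ℤ) ∈ T := (hcover 2 (by decide)).resolve_right fun h =>
    hdisj 1 h1 (by simpa using hadd 1 h1 (-2) h (by decide))
  have hpos : ∀ n : ℕ, (n + 1 : ℤ) ∈ T := by
    intro n
    induction n with
    | zero => simpa using h1
    | succ n ih =>
      rcases eq_or_ne n 0 with rfl | hn
      · simpa [one_add_one_eq_two] using h2
      · push_cast
        exact hadd _ ih 1 h1 (by omega)
  ext j
  refine ⟨fun hj => Set.mem_Ioi.mpr (lt_of_not_ge fun hj0 => ?_), fun hj => ?_⟩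
  · rcases hj0.lt_or_eq with hneg | rfl
    · have := hpos (-j - 1).toNat
      exact hdisj j hj (by rwa [show ((-j - 1).toNat : ℤ) + 1 = -j by omega] at this)
    · exact hdisj 0 hj (by simpa using hj)
  · have := hpos (j - 1).toNat
    rwa [show ((j - 1).toNat : ℤ) + 1 = j by have : 0 < j := hj; omega] at this

theorem eq_Ioi_zero_or_eq_Iio_zero {T : Set ℤ} (hcover : ∀ k, k ≠ 0 → k ∈ T ∨ -k ∈ T)
    (hdisj : ∀ j ∈ T, -j ∉ T) (hadd : ∀ j ∈ T, ∀ k ∈ T, j ≠ k → j + k ∈ T) :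
    T = Set.Ioi 0 ∨ T = Set.Iio 0 := by
  rcases hcover 1 one_ne_zero with h1 | h1
  · exact Or.inl (eq_Ioi_zero_of_one_mem hcover hdisj hadd h1)
  · right
    have : -T = Set.Ioi 0 := by
      refine eq_Ioi_zero_of_one_mem (fun k hk => ?_) (fun j hj => hdisj (-j) hj)
        (fun j hj k hk hjk => ?_) h1
      · simpa [Set.mem_neg, or_comm] using hcover k hk
      · simpa [Set.mem_neg, neg_add_rev] using hadd _ hk _ hj (neg_injective.ne hjk.symm)
    rw [← neg_neg T, this, Set.neg_Ioi, neg_zero]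

end Int

theorem image_Ioi_zero_eq_range {α : Type*} (f : ℤ → α) :
    f '' Set.Ioi 0 = Set.range fun n : ℕ => f ((n + 1 : ℕ)) := by
  ext x
  refine ⟨fun ⟨j, hj, hx⟩ => ⟨(j - 1).toNat, ?_⟩, fun ⟨n, hx⟩ => ⟨_, by simp, hx⟩⟩
  have : 0 < j := hj
  rw [← hx]
  exact congr_arg f (by omega)

theorem image_Iio_zero_eq_range {α : Type*} (f : ℤ → α) :
    f '' Set.Iio 0 = Set.range fun n : ℕ => f (-(n + 1 : ℕ)) := by
  rw [show Set.Iio (0 : ℤ) = -Set.Ioi 0 by simp, ← Set.image_neg_eq_neg, ← Set.image_comp,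
    image_Ioi_zero_eq_range]
  rfl

theorem Set.Subsingleton.of_linearIndependent_dual {K V : Type*} [Field K] [AddCommGroup V]
    [Module K V] {v₀ : V} (hv₀ : ∀ v : V, ∃ c : K, c • v₀ = v) {J : Set (Dual K V)}
    (hJ : LinearIndependent K ((↑) : J → Dual K V)) : J.Subsingleton := by
  have hker : LinearMap.ker (Dual.eval K V v₀) = ⊥ := by
    refine LinearMap.ker_eq_bot'.mpr fun γ hγ => LinearMap.ext fun v => ?_
    obtain ⟨c, rfl⟩ := hv₀ v
    simp_all
  have := (hJ.map' _ hker).cardinal_lift_le_rank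
  rw [rank_self, Cardinal.lift_one, Cardinal.lift_le_one_iff] at this
  exact Cardinal.mk_le_one_iff_set_subsingleton.mp this

theorem AddSubsemigroup.mem_closure_singleton_iff {M : Type*} [AddMonoid M] {β x : M} :
    x ∈ closure {β} ↔ ∃ n : ℕ+, (n : ℕ) • β = x := by
  constructor
  · intro hx
    induction hx using closure_induction with
    | mem x hx => exact ⟨1, by simpa using hx.symm⟩
    | add x y _ _ hx hy =>
      obtain ⟨n, rfl⟩ := hx
      obtain ⟨m, rfl⟩ := hy
      exact ⟨n + m, by rw [PNat.add_coe, add_nsmul]⟩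
  · rintro ⟨n, rfl⟩
    induction n using PNat.recOn with
    | one => simpa using subset_closure (Set.mem_singleton β)
    | succ n ih =>
      rw [PNat.add_coe, PNat.one_coe, succ_nsmul]
      exact add_mem ih (subset_closure (Set.mem_singleton β))

noncomputable def AddSubsemigroup.closureSingletonAddEquivPNat {M : Type*} [AddCommGroup M]
    [IsAddTorsionFree M] {β : M} (hβ : β ≠ 0) : closure {β} ≃+ ℕ+ :=
  AddEquiv.symm <| AddEquiv.ofBijective
    ({ toFun := fun n => ⟨(n : ℕ) • β, mem_closure_singleton_iff.mpr ⟨n, rfl⟩⟩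
       map_add' := fun n m => Subtype.ext (by simp [add_nsmul]) } : AddHom ℕ+ (closure {β}))
    ⟨fun n m hnm => by
        have h : (n : ℕ) • β = (m : ℕ) • β := congr_arg Subtype.val hnm
        rw [← natCast_zsmul, ← natCast_zsmul] at h
        exact PNat.coe_injective (Int.ofNat_inj.mp (smul_left_injective ℤ hβ h)),
      fun ⟨x, hx⟩ => by
        obtain ⟨n, rfl⟩ := mem_closure_singleton_iff.mp hx
        exact ⟨n, rfl⟩⟩

theorem nonempty_addEquiv_pnat_of_linearIndependent_dual {K V : Type*} [Field K] [CharZero K]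
    [AddCommGroup V] [Module K V] {v₀ : V} (hv₀ : ∀ v : V, ∃ c : K, c • v₀ = v)
    {J : Set (Dual K V)} (hJ : LinearIndependent K ((↑) : J → Dual K V)) (hJ0 : J.Nonempty) :
    Nonempty (AddSubsemigroup.closure J ≃+ ℕ+) := by
  obtain ⟨β, hβ⟩ := hJ0
  obtain rfl := (Set.Subsingleton.of_linearIndependent_dual hv₀ hJ).eq_singleton_of_mem hβ
  have := IsAddTorsionFree.of_isTorsionFree K (Dual K V)
  exact ⟨AddSubsemigroup.closureSingletonAddEquivPNat (hJ.ne_zero ⟨β, hβ⟩)⟩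

theorem map_span_image_eq_span_image_neg {K M : Type*} [Field K] [AddCommGroup M] [Module K M]
    {L : ℤ → M} {σ : M →ₗ[K] M} {lam : K} (hlam : lam ≠ 0)
    (hσ : ∀ n : ℤ, σ (L n) = lam ^ n • L (-n)) (S : Set ℤ) :
    (Submodule.span K (L '' S)).map σ = Submodule.span K (L '' (-S)) := by
  rw [Submodule.map_span, ← Set.image_comp]
  refine le_antisymm (Submodule.span_le.mpr ?_) (Submodule.span_le.mpr ?_)
  · rintro _ ⟨j, hj, rfl⟩
    rw [Function.comp_apply, hσ]
    exact Submodule.smul_mem _ _ (Submodule.subset_span ⟨-j, by simpa using hj, rfl⟩)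
  · rintro _ ⟨j, hj, rfl⟩
    have : L j = (lam ^ (-j))⁻¹ • σ (L (-j)) := by
      rw [hσ, neg_neg, smul_smul, inv_mul_cancel₀ (zpow_ne_zero _ hlam), one_smul]
    rw [this]
    exact Submodule.smul_mem _ _ (Submodule.subset_span ⟨-j, hj, rfl⟩)

theorem Module.Basis.eq_repr_smul_of_support_subset {ι R M : Type*} [Semiring R]
    [AddCommMonoid M] [Module R M] (b : Basis ι R M) {x : M} {i : ι}
    (hx : (b.repr x).support ⊆ {i}) : x = b.repr x i • b i := by
  rw [← b.repr_symm_single, ← Finsupp.support_subset_singleton.mp hx, LinearEquiv.symm_apply_apply]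

noncomputable def reflectBasis {R M : Type*} [Ring R] [AddCommGroup M] [Module R M]
    (L : Basis ℤ R M) : Basis ℤ R M :=
  (L.reindex (Equiv.neg ℤ)).unitsSMul fun _ => -1

section reflectBasis

variable {R M : Type*} [CommRing R] [AddCommGroup M] [Module R M] (L : Basis ℤ R M)

theorem reflectBasis_apply (j : ℤ) : reflectBasis L j = -L (-j) := by
  rw [reflectBasis, Basis.unitsSMul_apply, Basis.reindex_apply]
  simp

theorem reflectBasis_repr_apply (x : M) (k : ℤ) : (reflectBasis L).repr x k = -L.repr x (-k) := by
  rw [reflectBasis, Basis.repr_unitsSMul, Basis.repr_reindex_apply]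
  simp

end reflectBasis

section LieEigenspaces

variable {g : Type*} [LieRing g] [LieAlgebra ℂ g]

theorem le_iSup_inf_eigenspace_of_eq_iSup_wtSpace {H : LieSubalgebra ℂ g} {V : Submodule ℂ g}
    {Q : Set (Dual ℂ H)} (hV : V = ⨆ α ∈ Q, wtSpace H α) (h : H) :
    V ≤ ⨆ μ, V ⊓ (LieAlgebra.ad ℂ g h).eigenspace μ := by
  conv_lhs => rw [hV]
  refine iSup₂_le fun α hα => le_iSup_of_le (α h) (le_inf ?_ fun v hv => ?_)
  · exact hV ▸ le_iSup₂ (f := fun α (_ : α ∈ Q) => wtSpace H α) α hα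
  · exact Module.End.mem_eigenspace_iff.mpr (hv h)

theorem map_eigenspace_ad_le {σ : g →ₗ[ℂ] g} (hanti : ∀ x y : g, σ ⁅x, y⁆ = ⁅σ y, σ x⁆)
    {h : g} (hσh : σ h = h) (μ : ℂ) :
    ((LieAlgebra.ad ℂ g h).eigenspace μ).map σ ≤ (LieAlgebra.ad ℂ g h).eigenspace (-μ) := by
  intro w hw
  obtain ⟨v, hv, rfl⟩ := Submodule.mem_map.mp hw
  rw [Module.End.mem_eigenspace_iff, LieAlgebra.ad_apply] at hv ⊢
  rw [← hσh, ← hanti, ← lie_skew, hv, map_neg, map_smul, neg_smul]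

theorem iSup_eigenspace_ad_eq_top {σ : g →ₗ[ℂ] g} (hanti : ∀ x y : g, σ ⁅x, y⁆ = ⁅σ y, σ x⁆)
    {h : g} (hσh : σ h = h) {V K : Submodule ℂ g}
    (hV : V ≤ ⨆ μ, (LieAlgebra.ad ℂ g h).eigenspace μ) (hK : ∀ x ∈ K, ⁅h, x⁆ = 0)
    (hsup : V.map σ ⊔ K ⊔ V = ⊤) : ⨆ μ, (LieAlgebra.ad ℂ g h).eigenspace μ = ⊤ := by
  refine eq_top_iff.mpr (hsup ▸ sup_le (sup_le ?_ fun x hx => ?_) hV)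
  · refine (Submodule.map_mono hV).trans ?_
    rw [Submodule.map_iSup]
    exact iSup_le fun μ => (map_eigenspace_ad_le hanti hσh μ).trans (le_iSup _ (-μ))
  · exact Submodule.mem_iSup_of_mem (0 : ℂ) (Module.End.mem_eigenspace_iff.mpr (by simp [hK x hx]))

end LieEigenspaces

section Witt

variable {W : Type*} [LieRing W] [LieAlgebra ℂ W]

def IsWittBasis (L : Basis ℤ ℂ W) : Prop :=
  ∀ m n : ℤ, ⁅L m, L n⁆ = ((m - n : ℤ) : ℂ) • L (m + n)

namespace IsWittBasis

variable {L : Basis ℤ ℂ W}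

theorem repr_lie_apply (hL : IsWittBasis L) (x y : W) (k : ℤ) :
    L.repr ⁅x, y⁆ k = ∑ n ∈ (L.repr x).support, ∑ m ∈ (L.repr y).support,
      if n + m = k then L.repr x n * L.repr y m * (n - m) else 0 := by
  conv_lhs => rw [← L.linearCombination_repr x, ← L.linearCombination_repr y]
  simp only [Finsupp.linearCombination_apply, Finsupp.sum, sum_lie, lie_sum, smul_lie, lie_smul,
    hL _ _, map_sum, map_smul, L.repr_self, Finsupp.finsetSum_apply, Finsupp.smul_apply,
    Finsupp.single_apply, smul_eq_mul]
  rw [Finset.sum_comm]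
  refine Finset.sum_congr rfl fun n _ => ?_
  rw [Finset.mul_sum]
  refine Finset.sum_congr rfl fun m _ => ?_
  split_ifs <;> push_cast <;> ring

theorem repr_lie_add_of_support_le (hL : IsWittBasis L) {x y : W} {N M : ℤ}
    (hx : ∀ n ∈ (L.repr x).support, n ≤ N) (hy : ∀ m ∈ (L.repr y).support, m ≤ M) :
    L.repr ⁅x, y⁆ (N + M) = L.repr x N * L.repr y M * (N - M) := by
  rw [hL.repr_lie_apply, Finset.sum_eq_single N, Finset.sum_eq_single M, if_pos rfl]
  · intro m hm hmM
    exact if_neg (by have := hy m hm; omega)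
  · intro hM
    simp [Finsupp.notMem_support_iff.mp hM]
  · intro n hn hnN
    refine Finset.sum_eq_zero fun m hm => if_neg ?_
    have := hx n hn
    have := hy m hm
    omega
  · intro hN
    simp [Finsupp.notMem_support_iff.mp hN]

theorem repr_lie_L0_apply (hL : IsWittBasis L) (v : W) (m : ℤ) :
    L.repr ⁅L 0, v⁆ m = -m * L.repr v m := by
  rw [hL.repr_lie_apply, L.repr_self, Finsupp.support_single _ one_ne_zero,
    Finset.sum_singleton]
  simp only [zero_add, Finsupp.single_eq_same, one_mul, zero_sub, Int.cast_zero]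
  rw [Finset.sum_ite_eq']
  split_ifs with h
  · ring
  · simp [Finsupp.notMem_support_iff.mp h]

theorem repr_eq_zero_of_lie_L0_eq (hL : IsWittBasis L) {v : W} {μ : ℂ}
    (hv : ⁅L 0, v⁆ = μ • v) {m : ℤ} (hm : (m : ℂ) ≠ -μ) : L.repr v m = 0 := by
  have h := congr_arg (L.repr · m) hv
  simp only [hL.repr_lie_L0_apply, map_smul, Finsupp.smul_apply, smul_eq_mul] at h
  have : ((m : ℂ) + μ) * L.repr v m = 0 := by linear_combination -h
  exact (mul_eq_zero.mp this).resolve_left fun h' => hm (eq_neg_of_add_eq_zero_left h')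

theorem eq_repr_smul_of_lie_L0_eq (hL : IsWittBasis L) {v : W} {μ : ℂ}
    (hv : ⁅L 0, v⁆ = μ • v) {m : ℤ} (hm : (m : ℂ) = -μ) : v = L.repr v m • L m := by
  refine L.eq_repr_smul_of_support_subset fun n hn => Finset.mem_singleton.mpr ?_
  by_contra hnm
  refine Finsupp.mem_support_iff.mp hn (hL.repr_eq_zero_of_lie_L0_eq hv fun h => hnm ?_)
  exact_mod_cast h.trans hm.symm

theorem exists_eq_smul_of_lie_L0_eq (hL : IsWittBasis L) {v : W} {μ : ℂ}
    (hv : ⁅L 0, v⁆ = μ • v) : ∃ m : ℤ, v = L.repr v m • L m := by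
  by_cases h : ∃ m, L.repr v m ≠ 0
  · obtain ⟨m, hm⟩ := h
    refine ⟨m, hL.eq_repr_smul_of_lie_L0_eq hv ?_⟩
    by_contra h'
    exact hm (hL.repr_eq_zero_of_lie_L0_eq hv h')
  · push Not at h
    obtain rfl : v = 0 := L.repr.injective (by ext m; simp [h])
    exact ⟨0, by simp⟩

theorem support_le_of_mem_eigenspace (hL : IsWittBasis L) {h : W} {N : ℤ} (hN0 : 0 < N)
    (hN : ∀ n ∈ (L.repr h).support, n ≤ N) (hhN : L.repr h N ≠ 0) {μ : ℂ} {v : W}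
    (hv : v ∈ (LieAlgebra.ad ℂ W h).eigenspace μ) : ∀ j ∈ (L.repr v).support, j ≤ N := by
  by_contra! ⟨j, hj, hNj⟩
  set M := (L.repr v).support.max' ⟨j, hj⟩
  have hM : ∀ m ∈ (L.repr v).support, m ≤ M := fun m hm => Finset.le_max' _ m hm
  have hvM : L.repr v M ≠ 0 := Finsupp.mem_support_iff.mp (Finset.max'_mem _ _)
  have hjM : j ≤ M := hM j hj
  -- the top coefficient of `⁅h, v⁆` sits in degree `N + M`, above the support of `v`
  have hvNM : L.repr v (N + M) = 0 :=
    Finsupp.notMem_support_iff.mp fun hmem => by have := hM _ hmem; omega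
  have htop := hL.repr_lie_add_of_support_le hN hM
  rw [← LieAlgebra.ad_apply ℂ, Module.End.mem_eigenspace_iff.mp hv, map_smul,
    Finsupp.smul_apply, hvNM, smul_zero] at htop
  have hNM : (N : ℂ) - M ≠ 0 := by
    rw [← Int.cast_sub, Int.cast_ne_zero]
    omega
  exact mul_ne_zero (mul_ne_zero hhN hvM) hNM htop.symm

theorem repr_eq_zero_of_iSup_eigenspace_eq_top (hL : IsWittBasis L) {h : W}
    (hdiag : ⨆ μ, (LieAlgebra.ad ℂ W h).eigenspace μ = ⊤) {k : ℤ} (hk : 0 < k) :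
    L.repr h k = 0 := by
  by_contra hhk
  have hne : (L.repr h).support.Nonempty := ⟨k, Finsupp.mem_support_iff.mpr hhk⟩
  set N := (L.repr h).support.max' hne
  have hkN : k ≤ N := Finset.le_max' _ k (Finsupp.mem_support_iff.mpr hhk)
  have hle : ⨆ μ, (LieAlgebra.ad ℂ W h).eigenspace μ ≤ Submodule.span ℂ (L '' Set.Iic N) :=
    iSup_le fun μ v hv => L.mem_span_image.mpr fun j hj =>
      hL.support_le_of_mem_eigenspace (hkN.trans_lt' hk) (fun n hn => Finset.le_max' _ n hn)
        (Finsupp.mem_support_iff.mp (Finset.max'_mem _ hne)) hv j hj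
  rw [hdiag] at hle
  simpa using L.self_mem_span_image.mp (hle (Submodule.mem_top (x := L (N + 1))))

theorem reflect (hL : IsWittBasis L) : IsWittBasis (reflectBasis L) := by
  intro m n
  simp only [reflectBasis_apply, neg_lie, lie_neg, neg_neg, hL (-m), neg_add, smul_neg]
  rw [← neg_smul]
  congr 1
  push_cast
  ring

theorem eq_smul_L0_of_iSup_eigenspace_eq_top (hL : IsWittBasis L) {h : W}
    (hdiag : ⨆ μ, (LieAlgebra.ad ℂ W h).eigenspace μ = ⊤) : h = L.repr h 0 • L 0 := by
  refine L.eq_repr_smul_of_support_subset fun k hk => Finset.mem_singleton.mpr ?_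
  by_contra hk0
  refine Finsupp.mem_support_iff.mp hk ?_
  rcases lt_or_gt_of_ne hk0 with hneg | hpos
  · have := hL.reflect.repr_eq_zero_of_iSup_eigenspace_eq_top hdiag (neg_pos.mpr hneg)
    rwa [reflectBasis_repr_apply, neg_neg, neg_eq_zero] at this
  · exact hL.repr_eq_zero_of_iSup_eigenspace_eq_top hdiag hpos

theorem apply_eq_repr_smul_of_anti (hL : IsWittBasis L) {σ : W →ₗ[ℂ] W}
    (hanti : ∀ x y : W, σ ⁅x, y⁆ = ⁅σ y, σ x⁆) (h0 : σ (L 0) = L 0) (j : ℤ) :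
    σ (L j) = L.repr (σ (L j)) (-j) • L (-j) := by
  have hj : ⁅L 0, σ (L j)⁆ = (j : ℂ) • σ (L j) := by
    rw [← h0, ← hanti, hL j 0, add_zero, sub_zero, map_smul]
  exact hL.eq_repr_smul_of_lie_L0_eq hj (by push_cast; ring)

theorem exists_apply_eq_zpow_smul_of_anti (hL : IsWittBasis L) {σ : W →ₗ[ℂ] W}
    (hanti : ∀ x y : W, σ ⁅x, y⁆ = ⁅σ y, σ x⁆) (h0 : σ (L 0) = L 0) :
    ∃ lam : ℂ, lam ≠ 0 ∧ ∀ n : ℤ, σ (L n) = lam ^ n • L (-n) := by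
  set c : ℤ → ℂ := fun j => L.repr (σ (L j)) (-j)
  have hc : ∀ j, σ (L j) = c j • L (-j) := hL.apply_eq_repr_smul_of_anti hanti h0
  have hc0 : c 0 = 1 := by simpa using congr_arg (L.repr · 0) ((hc 0).symm.trans h0)
  have hcadd : ∀ m n, m ≠ n → c (m + n) = c m * c n := by
    intro m n hmn
    have h := congr_arg (L.repr · (-(m + n))) (hanti (L m) (L n))
    simp only [hL m n, hc, map_smul, smul_lie, lie_smul, hL (-n) (-m), neg_add_rev, add_comm (-n),
      Finsupp.smul_apply, L.repr_self, Finsupp.single_eq_same, smul_eq_mul, mul_one] at h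
    have hmn' : ((m - n : ℤ) : ℂ) ≠ 0 := Int.cast_ne_zero.mpr (sub_ne_zero.mpr hmn)
    refine mul_left_cancel₀ hmn' ?_
    rw [h]
    push_cast
    ring
  have hzpow := eq_zpow_of_map_add_of_ne hc0 hcadd
  refine ⟨c 1, fun h1 => ?_, fun n => by rw [hc, hzpow]⟩
  simpa [h1, hc0] using hcadd 1 (-1) (by decide)

theorem eq_span_L0_of_forall_iSup_eigenspace_eq_top (hL : IsWittBasis L) {H : Submodule ℂ W}
    (hH : H ≠ ⊥) (hdiag : ∀ h ∈ H, ⨆ μ, (LieAlgebra.ad ℂ W h).eigenspace μ = ⊤) :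
    H = ℂ ∙ L 0 := by
  have hsmul : ∀ h ∈ H, h = L.repr h 0 • L 0 := fun h hh =>
    hL.eq_smul_L0_of_iSup_eigenspace_eq_top (hdiag h hh)
  obtain ⟨h, hh, hh0⟩ := Submodule.ne_bot_iff H |>.mp hH
  have hc : L.repr h 0 ≠ 0 := fun hc => hh0 (by rw [hsmul h hh, hc, zero_smul])
  have hL0 : L 0 ∈ H := by
    rw [← Submodule.smul_mem_iff _ hc, ← hsmul h hh]
    exact hh
  refine le_antisymm (fun x hx => ?_) (Submodule.span_le.mpr (Set.singleton_subset_iff.mpr hL0))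
  exact Submodule.mem_span_singleton.mpr ⟨_, (hsmul x hx).symm⟩

theorem eq_span_image_setOf_mem (hL : IsWittBasis L) {V : Submodule ℂ W}
    (hV : V ≤ ⨆ μ, V ⊓ (LieAlgebra.ad ℂ W (L 0)).eigenspace μ) :
    V = Submodule.span ℂ (L '' {j | L j ∈ V}) := by
  refine le_antisymm (hV.trans (iSup_le fun μ v ⟨hvV, hv⟩ => ?_)) ?_
  · obtain ⟨m, hm⟩ := hL.exists_eq_smul_of_lie_L0_eq (Module.End.mem_eigenspace_iff.mp hv)
    rcases eq_or_ne (L.repr v m) 0 with hc | hc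
    · rw [hm, hc, zero_smul]
      exact zero_mem _
    · have hLm : L m ∈ V := by
        rw [← Submodule.smul_mem_iff _ hc, ← hm]
        exact hvV
      rw [hm]
      exact Submodule.smul_mem _ _ (Submodule.subset_span ⟨m, hLm, rfl⟩)
  · exact Submodule.span_le.mpr (Set.image_subset_iff.mpr fun j hj => hj)

theorem setOf_mem_eq_Ioi_or_Iio (hL : IsWittBasis L) {V : LieSubalgebra ℂ W}
    {V' : Submodule ℂ W} (hV : V.toSubmodule = Submodule.span ℂ (L '' {j | L j ∈ V}))
    (hV' : V' = Submodule.span ℂ (L '' (-{j | L j ∈ V})))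
    (hsup : V' ⊔ (ℂ ∙ L 0) ⊔ V.toSubmodule = ⊤) (hdisj : Disjoint V' V.toSubmodule) :
    {j | L j ∈ V} = Set.Ioi 0 ∨ {j | L j ∈ V} = Set.Iio 0 := by
  refine Int.eq_Ioi_zero_or_eq_Iio_zero (fun k hk => ?_) (fun j hj hj' => ?_)
    (fun j hj k hk hjk => ?_)
  · have hLk : L k ∈ V' ⊔ (ℂ ∙ L 0) ⊔ V.toSubmodule := hsup ▸ Submodule.mem_top
    rw [hV, hV', ← Set.image_singleton, ← Submodule.span_union, ← Submodule.span_union,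
      ← Set.image_union, ← Set.image_union, L.self_mem_span_image] at hLk
    rcases hLk with (hk' | hk') | hk'
    · exact Or.inr hk'
    · exact absurd hk' hk
    · exact Or.inl hk'
  · have hV'j : L (-j) ∈ V' := hV' ▸ Submodule.subset_span ⟨-j, by simpa using hj, rfl⟩
    exact L.ne_zero _ (Submodule.disjoint_def.mp hdisj _ hV'j hj')
  · have hjk' : ((j - k : ℤ) : ℂ) ≠ 0 := Int.cast_ne_zero.mpr (sub_ne_zero.mpr hjk)
    have hLjk := V.lie_mem hj hk
    rw [hL j k] at hLjk
    exact (Submodule.smul_mem_iff V.toSubmodule hjk').mp hLjk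

theorem eq_span_image_Iio_and_Ioi_or (hL : IsWittBasis L) {V : LieSubalgebra ℂ W}
    {V' : Submodule ℂ W}
    (hV : V.toSubmodule ≤ ⨆ μ, V.toSubmodule ⊓ (LieAlgebra.ad ℂ W (L 0)).eigenspace μ)
    {σ : W →ₗ[ℂ] W} {lam : ℂ} (hlam : lam ≠ 0) (hσ : ∀ n : ℤ, σ (L n) = lam ^ n • L (-n))
    (hmap : V.toSubmodule.map σ = V') (hsup : V' ⊔ (ℂ ∙ L 0) ⊔ V.toSubmodule = ⊤)
    (hdisj : Disjoint V' V.toSubmodule) :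
    (V.toSubmodule = Submodule.span ℂ (L '' Set.Iio 0) ∧ V' = Submodule.span ℂ (L '' Set.Ioi 0)) ∨
      (V.toSubmodule = Submodule.span ℂ (L '' Set.Ioi 0) ∧
        V' = Submodule.span ℂ (L '' Set.Iio 0)) := by
  have hVT : V.toSubmodule = Submodule.span ℂ (L '' {j | L j ∈ V}) :=
    hL.eq_span_image_setOf_mem hV
  have hV'T : V' = Submodule.span ℂ (L '' (-{j | L j ∈ V})) := by
    rw [← hmap, hVT, map_span_image_eq_span_image_neg hlam hσ]
  rw [hV'T, hVT]
  rcases hL.setOf_mem_eq_Ioi_or_Iio hVT hV'T hsup hdisj with hT | hT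
  · rw [hT, Set.neg_Ioi, neg_zero]
    exact Or.inr ⟨rfl, rfl⟩
  · rw [hT, Set.neg_Iio, neg_zero]
    exact Or.inl ⟨rfl, rfl⟩

end IsWittBasis

end Witt

theorem witt_triangular_decomposition_general {W : Type*} [LieRing W] [LieAlgebra ℂ W]
    (L : Module.Basis ℤ ℂ W)
    (hW : ∀ m n : ℤ, ⁅L m, L n⁆ = ((m - n : ℤ) : ℂ) • L (m + n))
    (Wp Wm H : LieSubalgebra ℂ W) (Q : AddSubsemigroup (Module.Dual ℂ H))
    (σ : W →ₗ[ℂ] W)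
    (hp : Wp ≠ ⊥) (hH : H ≠ ⊥)
    (habel : ∀ x y : W, x ∈ H → y ∈ H → ⁅x, y⁆ = 0)
    (hsup : Wm.toSubmodule ⊔ H.toSubmodule ⊔ Wp.toSubmodule = ⊤)
    (hindep : ∀ a ∈ Wm, ∀ b ∈ H, ∀ c' ∈ Wp, a + b + c' = (0 : W) →
      a = 0 ∧ b = 0 ∧ c' = 0)
    (htd1 : Wp.toSubmodule = ⨆ α ∈ (Q : Set (Module.Dual ℂ H)), wtSpace H α)
    (hanti : ∀ x y : W, σ ⁅x, y⁆ = ⁅σ y, σ x⁆)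
    (hmap : Wp.toSubmodule.map σ = Wm.toSubmodule) (hfix : ∀ x ∈ H, σ x = x)
    (htd3 : ∃ J : Set (Module.Dual ℂ H),
      LinearIndependent ℂ ((↑) : J → Module.Dual ℂ H) ∧
      AddSubsemigroup.closure J = Q) :
    H.toSubmodule = Submodule.span ℂ ({L 0} : Set W) ∧
    ((Wp.toSubmodule = Submodule.span ℂ (Set.range fun n : ℕ => L (-(n + 1 : ℕ))) ∧
      Wm.toSubmodule = Submodule.span ℂ (Set.range fun n : ℕ => L ((n + 1 : ℕ)))) ∨
     (Wp.toSubmodule = Submodule.span ℂ (Set.range fun n : ℕ => L ((n + 1 : ℕ))) ∧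
      Wm.toSubmodule = Submodule.span ℂ (Set.range fun n : ℕ => L (-(n + 1 : ℕ))))) ∧
    (∃ e : Q ≃ ℕ+, ∀ a b : Q, e (a + b) = e a + e b) ∧
    (∃ lam : ℂ, lam ≠ 0 ∧ ∀ n : ℤ, σ (L n) = lam ^ n • L (-n)) := by
  have hL : IsWittBasis L := hW
  have hWpE := le_iSup_inf_eigenspace_of_eq_iSup_wtSpace htd1
  have hdiag : ∀ h ∈ H, ⨆ μ, (LieAlgebra.ad ℂ W h).eigenspace μ = ⊤ := fun h hh =>
    iSup_eigenspace_ad_eq_top hanti (hfix h hh)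
      ((hWpE ⟨h, hh⟩).trans (iSup_mono fun _ => inf_le_right)) (fun x hx => habel h x hh hx)
      (hmap ▸ hsup)
  have hH0 := hL.eq_span_L0_of_forall_iSup_eigenspace_eq_top
    ((LieSubalgebra.toSubmodule_eq_bot H).not.mpr hH) hdiag
  have hL0 : L 0 ∈ H := hH0.ge (Submodule.mem_span_singleton_self (L 0))
  obtain ⟨lam, hlam, hσ⟩ := hL.exists_apply_eq_zpow_smul_of_anti hanti (hfix _ hL0)
  refine ⟨hH0, ?_, ?_, lam, hlam, hσ⟩
  · have hdisj : Disjoint Wm.toSubmodule Wp.toSubmodule := Submodule.disjoint_def.mpr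
      fun x hxm hxp => (hindep x hxm 0 H.zero_mem (-x) (Wp.neg_mem hxp) (by abel)).1
    rcases hL.eq_span_image_Iio_and_Ioi_or (hWpE ⟨L 0, hL0⟩) hlam hσ hmap (hH0 ▸ hsup) hdisj
      with ⟨hWp, hWm⟩ | ⟨hWp, hWm⟩
    · exact Or.inl ⟨by rw [hWp, image_Iio_zero_eq_range], by rw [hWm, image_Ioi_zero_eq_range]⟩
    · exact Or.inr ⟨by rw [hWp, image_Ioi_zero_eq_range], by rw [hWm, image_Iio_zero_eq_range]⟩
  · obtain ⟨J, hJ, rfl⟩ := htd3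
    have hJ0 : J.Nonempty := Set.nonempty_iff_ne_empty.mpr fun hJ0 => hp <| by
      rw [← LieSubalgebra.toSubmodule_eq_bot, htd1, hJ0]
      simp
    have hH1 : ∀ x : H, ∃ c : ℂ, c • (⟨L 0, hL0⟩ : H) = x := fun x => by
      obtain ⟨c, hc⟩ := Submodule.mem_span_singleton.mp (hH0 ▸ x.2 : (x : W) ∈ ℂ ∙ L 0)
      exact ⟨c, Subtype.ext hc⟩
    obtain ⟨e⟩ := nonempty_addEquiv_pnat_of_linearIndependent_dual hH1 hJ hJ0
    exact ⟨e.toEquiv, e.map_add⟩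

/-- If `(W, H, W₊, Q₊, σ)` is a Moody–Pianzola triangular decomposition of the
Witt algebra, then `H = ℂ L₀`, `W₊` is spanned by the `L_{-n}` (`n ≥ 1`) — up to
swapping `±` —, `Q₊ ≅ ℕ⁺` as additive semigroups, and `σ (L n) = λⁿ • L (-n)`
for some `λ ≠ 0`. -/
theorem witt_triangular_decomposition {W : Type*} [LieRing W] [LieAlgebra ℂ W]
    (L : Module.Basis ℤ ℂ W)
    (hW : ∀ m n : ℤ, ⁅L m, L n⁆ = ((m - n : ℤ) : ℂ) • L (m + n))
    (Wp Wm H : LieSubalgebra ℂ W) (Q : AddSubsemigroup (Module.Dual ℂ H))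
    (σ : W →ₗ[ℂ] W)
    (hp : Wp ≠ ⊥) (hm : Wm ≠ ⊥) (hH : H ≠ ⊥)
    (habel : ∀ x y : W, x ∈ H → y ∈ H → ⁅x, y⁆ = 0)
    (hsup : Wm.toSubmodule ⊔ H.toSubmodule ⊔ Wp.toSubmodule = ⊤)
    (hindep : ∀ a ∈ Wm, ∀ b ∈ H, ∀ c' ∈ Wp, a + b + c' = (0 : W) →
      a = 0 ∧ b = 0 ∧ c' = 0)
    (htd1 : Wp.toSubmodule = ⨆ α ∈ (Q : Set (Module.Dual ℂ H)), wtSpace H α)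
    (hanti : ∀ x y : W, σ ⁅x, y⁆ = ⁅σ y, σ x⁆) (hinv : ∀ x : W, σ (σ x) = x)
    (hmap : Wp.toSubmodule.map σ = Wm.toSubmodule) (hfix : ∀ x ∈ H, σ x = x)
    (htd3 : ∃ J : Set (Module.Dual ℂ H),
      LinearIndependent ℂ ((↑) : J → Module.Dual ℂ H) ∧
      AddSubsemigroup.closure J = Q) :
    H.toSubmodule = Submodule.span ℂ ({L 0} : Set W) ∧
    ((Wp.toSubmodule = Submodule.span ℂ (Set.range fun n : ℕ => L (-(n + 1 : ℕ))) ∧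
      Wm.toSubmodule = Submodule.span ℂ (Set.range fun n : ℕ => L ((n + 1 : ℕ)))) ∨
     (Wp.toSubmodule = Submodule.span ℂ (Set.range fun n : ℕ => L ((n + 1 : ℕ))) ∧
      Wm.toSubmodule = Submodule.span ℂ (Set.range fun n : ℕ => L (-(n + 1 : ℕ))))) ∧
    (∃ e : Q ≃ ℕ+, ∀ a b : Q, e (a + b) = e a + e b) ∧
    (∃ lam : ℂ, lam ≠ 0 ∧ ∀ n : ℤ, σ (L n) = lam ^ n • L (-n)) :=
  witt_triangular_decomposition_general L hW Wp Wm H Q σ hp hH habel hsup hindep htd1 hanti hmap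
    hfix htd3
end

section
/- If S is a simple restricted L-module, then there exists s ∈ ℕ such that for all t ≥ s, the actions of d_t and h_t on S are locally nilpotent. -/
/-!
Grade `L` by `deg d_m = deg h_m = m`, `deg c = 0`, and let `F a` be the span of the basis
vectors of degree `≥ a`, so that `⁅F a, F b⁆ ⊆ F (a + b)`. Fix `w ≠ 0` and `n` with
`F a • w = 0` for all `a > n`. A word `x₁ ⋯ xₖ` with `xᵢ ∈ F aᵢ` and positive excess
`∑ (aᵢ - n)` kills `w`: some letter has `aᵢ > n`, and commuting it to the right only produces
shorter words of no smaller excess, because `n ≥ 0`. Hence the vectors killed by all words of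
large enough excess form a Lie submodule containing `w`, which is all of `S` by simplicity;
and for `t > n` the powers `d_tᵏ`, `h_tᵏ` are words of excess `k (t - n) → ∞`.
-/

/-- Index type for the basis of the deformed Heisenberg–Virasoro algebra `L`:
elements `d m`, `h n` (`m n : ℤ`) and the central element `c`. -/
inductive DHVIdx : Type
  | d : ℤ → DHVIdx
  | h : ℤ → DHVIdx
  | c : DHVIdx

open LieModule

section WordAction

variable {R g M : Type*} {F : ℤ → Set g}

-- A letter `⟨a, x⟩` is an `x ∈ F a` together with the degree `a`, as the sets `F a` overlap.
variable (F) in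
def excess (n₀ : ℤ) (xs : List (Σ a, F a)) : ℤ :=
  (xs.map fun p => p.1 - n₀).sum

@[simp]
lemma excess_nil (n₀ : ℤ) : excess F n₀ [] = 0 := rfl

@[simp]
lemma excess_cons (n₀ : ℤ) (p : Σ a, F a) (xs : List (Σ a, F a)) :
    excess F n₀ (p :: xs) = p.1 - n₀ + excess F n₀ xs := by
  simp [excess]

@[simp]
lemma excess_append (n₀ : ℤ) (xs ys : List (Σ a, F a)) :
    excess F n₀ (xs ++ ys) = excess F n₀ xs + excess F n₀ ys := by
  simp [excess]

variable [CommRing R] [LieRing g] [LieAlgebra R g]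
  [AddCommGroup M] [Module R M] [LieRingModule g M] [LieModule R g M]

variable (R M F) in
def wordAct (xs : List (Σ a, F a)) : Module.End R M :=
  (xs.map fun p => toEnd R g M p.2).prod

@[simp]
lemma wordAct_nil : wordAct R M F [] = 1 := rfl

@[simp]
lemma wordAct_cons (p : Σ a, F a) (xs : List (Σ a, F a)) :
    wordAct R M F (p :: xs) = toEnd R g M p.2 * wordAct R M F xs := by
  simp [wordAct]

@[simp]
lemma wordAct_append (xs ys : List (Σ a, F a)) :
    wordAct R M F (xs ++ ys) = wordAct R M F xs * wordAct R M F ys := by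
  simp [wordAct]

variable {n₀ : ℤ} {w : M}

variable (F) in
def BracketCompatible : Prop := ∀ a b, ∀ x ∈ F a, ∀ y ∈ F b, ⁅x, y⁆ ∈ F (a + b)

def lieLetter (hF : BracketCompatible F) (p q : Σ a, F a) : Σ a, F a :=
  ⟨p.1 + q.1, ⁅(p.2 : g), (q.2 : g)⁆, hF p.1 q.1 p.2 p.2.2 q.2 q.2.2⟩

lemma wordAct_cons_cons (hF : BracketCompatible F) (p q : Σ a, F a) (xs : List (Σ a, F a)) :
    wordAct R M F (p :: q :: xs) =
      wordAct R M F (q :: p :: xs) + wordAct R M F (lieLetter hF p q :: xs) := by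
  simp only [wordAct_cons, lieLetter, LieHom.map_lie, Ring.lie_def]
  noncomm_ring

lemma excess_lieLetter_cons (hF : BracketCompatible F) (hn₀ : 0 ≤ n₀) (p q : Σ a, F a)
    (xs : List (Σ a, F a)) :
    excess F n₀ (p :: q :: xs) ≤ excess F n₀ (lieLetter hF p q :: xs) := by
  simp only [excess_cons, lieLetter]
  omega

lemma wordAct_append_cons_apply_eq_zero (hF : BracketCompatible F) (hn₀ : 0 ≤ n₀)
    (hw : ∀ a, n₀ < a → ∀ x ∈ F a, ⁅x, w⁆ = 0) {N : ℕ}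
    (ih : ∀ ys, ys.length < N → 0 < excess F n₀ ys → wordAct R M F ys w = 0)
    (p : Σ a, F a) (hp : n₀ < p.1) (rs : List (Σ a, F a)) :
    ∀ ls, (ls ++ p :: rs).length = N → 0 < excess F n₀ (ls ++ p :: rs) →
      wordAct R M F (ls ++ p :: rs) w = 0 := by
  induction rs with
  | nil =>
    intro ls _ _
    simp [toEnd_apply_apply, hw p.1 hp p.2 p.2.2]
  | cons q rs ih_rs =>
    intro ls hlen hpos
    have hswapped : wordAct R M F (ls ++ q :: p :: rs) w = 0 := by
      simpa using ih_rs (ls ++ [q]) (by simpa using hlen) (by simp at hpos ⊢; omega)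
    have hbracket : wordAct R M F (ls ++ lieLetter hF p q :: rs) w = 0 := by
      refine ih _ (by simp at hlen ⊢; omega) ?_
      have := excess_lieLetter_cons hF hn₀ p q rs
      simp only [excess_append] at hpos ⊢
      omega
    rw [wordAct_append, wordAct_cons_cons hF, mul_add, ← wordAct_append, ← wordAct_append,
      LinearMap.add_apply, hswapped, hbracket, add_zero]

theorem wordAct_apply_eq_zero_of_excess_pos (hF : BracketCompatible F) (hn₀ : 0 ≤ n₀)
    (hw : ∀ a, n₀ < a → ∀ x ∈ F a, ⁅x, w⁆ = 0) (xs : List (Σ a, F a))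
    (hxs : 0 < excess F n₀ xs) : wordAct R M F xs w = 0 := by
  induction h : xs.length using Nat.strong_induction_on generalizing xs with
  | _ N ih =>
    obtain ⟨p, hp_mem, hp⟩ := List.exists_lt_of_sum_lt (fun _ => 0) (fun p : Σ a, F a => p.1 - n₀)
      (by simpa [excess] using hxs)
    obtain ⟨ls, rs, rfl⟩ := List.append_of_mem hp_mem
    exact wordAct_append_cons_apply_eq_zero hF hn₀ hw (fun ys hys hpos => ih _ hys ys hpos rfl) p
      (by simpa using hp) rs ls h hxs

variable (R M F) in
def eventuallyKilled (n₀ : ℤ) (hexh : ∀ x : g, ∃ a, x ∈ F a) : LieSubmodule R g M where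
  carrier := {v | ∃ D : ℤ, ∀ xs, D ≤ excess F n₀ xs → wordAct R M F xs v = 0}
  zero_mem' := ⟨0, fun xs _ => map_zero _⟩
  add_mem' := by
    rintro u v ⟨D, hu⟩ ⟨E, hv⟩
    refine ⟨max D E, fun xs hxs => ?_⟩
    rw [map_add, hu xs (le_of_max_le_left hxs), hv xs (le_of_max_le_right hxs), add_zero]
  smul_mem' := by
    rintro r v ⟨D, hv⟩
    exact ⟨D, fun xs hxs => by rw [map_smul, hv xs hxs, smul_zero]⟩
  lie_mem := by
    rintro x v ⟨D, hv⟩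
    obtain ⟨a, hx⟩ := hexh x
    refine ⟨D - (a - n₀), fun xs hxs => ?_⟩
    have := hv (xs ++ [⟨a, x, hx⟩]) (by simp; omega)
    simpa [toEnd_apply_apply] using this

lemma exists_toEnd_pow_apply_eq_zero_of_mem_eventuallyKilled {hexh : ∀ x : g, ∃ a, x ∈ F a}
    {v : M} (hv : v ∈ eventuallyKilled R M F n₀ hexh) {t : ℤ} (ht : n₀ < t) {x : g}
    (hx : x ∈ F t) : ∃ n : ℕ, (toEnd R g M x ^ n) v = 0 := by
  obtain ⟨D, hD⟩ := hv
  refine ⟨D.toNat, ?_⟩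
  have hexcess : D ≤ excess F n₀ (List.replicate D.toNat ⟨t, x, hx⟩) :=
    calc D ≤ D.toNat := Int.self_le_toNat D
      _ ≤ D.toNat * (t - n₀) := le_mul_of_one_le_right (by positivity) (by omega)
      _ = excess F n₀ (List.replicate D.toNat ⟨t, x, hx⟩) := by simp [excess]
  simpa [wordAct] using hD _ hexcess

theorem exists_toEnd_pow_apply_eq_zero (hF : BracketCompatible F) (hexh : ∀ x : g, ∃ a, x ∈ F a)
    (hn₀ : 0 ≤ n₀) (hsimple : ∀ N : LieSubmodule R g M, N = ⊥ ∨ N = ⊤) (hw0 : w ≠ 0)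
    (hw : ∀ a, n₀ < a → ∀ x ∈ F a, ⁅x, w⁆ = 0) {t : ℤ} (ht : n₀ < t) {x : g} (hx : x ∈ F t)
    (v : M) : ∃ n : ℕ, (toEnd R g M x ^ n) v = 0 := by
  have hw_mem : w ∈ eventuallyKilled R M F n₀ hexh :=
    ⟨1, fun xs hxs => wordAct_apply_eq_zero_of_excess_pos hF hn₀ hw xs hxs⟩
  have htop : eventuallyKilled R M F n₀ hexh = ⊤ := by
    refine (hsimple _).resolve_left fun hbot => hw0 ?_
    rwa [hbot, LieSubmodule.mem_bot] at hw_mem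
  exact exists_toEnd_pow_apply_eq_zero_of_mem_eventuallyKilled (htop ▸ LieSubmodule.mem_top v) ht hx

end WordAction

namespace DHVIdx

def deg : DHVIdx → ℤ
  | d m => m
  | h m => m
  | c => 0

end DHVIdx

section DHV

open Submodule

variable {g : Type*} [LieRing g] [LieAlgebra ℂ g] (B : Module.Basis DHVIdx ℂ g)

def dhvFiltration (a : ℤ) : Submodule ℂ g := span ℂ (B '' {i | a ≤ i.deg})

lemma dhvFiltration_antitone : Antitone (dhvFiltration B) :=
  fun _ _ hab => span_mono (Set.image_mono fun _ hi => le_trans hab hi)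

lemma basis_mem_dhvFiltration (i : DHVIdx) : B i ∈ dhvFiltration B i.deg :=
  subset_span (Set.mem_image_of_mem B (le_refl i.deg))

lemma exists_mem_dhvFiltration (x : g) : ∃ a, x ∈ dhvFiltration B a := by
  induction (B.span_eq ▸ mem_top : x ∈ span ℂ (Set.range B)) using span_induction with
  | mem x hx =>
    obtain ⟨i, rfl⟩ := hx
    exact ⟨i.deg, basis_mem_dhvFiltration B i⟩
  | zero => exact ⟨0, zero_mem _⟩
  | add x y _ _ hx hy =>
    obtain ⟨a, hx⟩ := hx
    obtain ⟨b, hy⟩ := hy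
    exact ⟨min a b, add_mem (dhvFiltration_antitone B (min_le_left a b) hx)
      (dhvFiltration_antitone B (min_le_right a b) hy)⟩
  | smul r x _ hx =>
    obtain ⟨a, hx⟩ := hx
    exact ⟨a, smul_mem _ r hx⟩

lemma lie_basis_mem_dhvFiltration
    (hdd : ∀ m n : ℤ, ⁅B (DHVIdx.d m), B (DHVIdx.d n)⁆ =
      ((m - n : ℤ) : ℂ) • B (DHVIdx.d (m + n)) +
      ((m - n : ℤ) : ℂ) • B (DHVIdx.h (m + n)) +
      (if m + n = 0 then ((m : ℂ) ^ 3 - (m : ℂ)) / 12 else 0) • B DHVIdx.c)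
    (hdh : ∀ m n : ℤ, ⁅B (DHVIdx.d m), B (DHVIdx.h n)⁆ =
      ((-n : ℤ) : ℂ) • B (DHVIdx.h (m + n)))
    (hhh : ∀ m n : ℤ, ⁅B (DHVIdx.h m), B (DHVIdx.h n)⁆ = 0)
    (hcen : ∀ x : g, ⁅x, B DHVIdx.c⁆ = 0) (i j : DHVIdx) :
    ⁅B i, B j⁆ ∈ dhvFiltration B (i.deg + j.deg) := by
  have hmem : ∀ k : DHVIdx, i.deg + j.deg ≤ k.deg → B k ∈ dhvFiltration B (i.deg + j.deg) :=
    fun k hk => subset_span ⟨k, hk, rfl⟩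
  cases i with
  | d m =>
    cases j with
    | d n =>
      rw [hdd]
      refine add_mem (add_mem (smul_mem _ _ (hmem _ le_rfl)) (smul_mem _ _ (hmem _ le_rfl))) ?_
      by_cases hmn : m + n = 0
      · exact smul_mem _ _ (hmem _ (by simp [DHVIdx.deg, hmn]))
      · simp [hmn]
    | h n => exact hdh m n ▸ smul_mem _ _ (hmem _ le_rfl)
    | c => exact hcen _ ▸ zero_mem _
  | h m =>
    cases j with
    | d n =>
      rw [← lie_skew, hdh, add_comm n m]
      exact neg_mem (smul_mem _ _ (hmem _ le_rfl))
    | h n => exact hhh m n ▸ zero_mem _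
    | c => exact hcen _ ▸ zero_mem _
  | c => rw [← lie_skew, hcen, neg_zero]; exact zero_mem _

lemma bracketCompatible_dhvFiltration
    (hB : ∀ i j, ⁅B i, B j⁆ ∈ dhvFiltration B (i.deg + j.deg)) :
    BracketCompatible fun a => (dhvFiltration B a : Set g) := by
  intro a b x hx y hy
  have hxy := apply_mem_map₂ (toEnd ℂ g g : g →ₗ[ℂ] Module.End ℂ g) hx hy
  rw [dhvFiltration, dhvFiltration, map₂_span_span] at hxy
  refine span_le.2 ?_ hxy
  rintro _ ⟨_, ⟨i, hi, rfl⟩, _, ⟨j, hj, rfl⟩, rfl⟩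
  exact dhvFiltration_antitone B (add_le_add hi hj) (hB i j)

lemma lie_eq_zero_of_mem_dhvFiltration {M : Type*} [AddCommGroup M] [Module ℂ M]
    [LieRingModule g M] [LieModule ℂ g M] {n : ℕ} {v : M}
    (hv : ∀ i : ℤ, (n : ℤ) ≤ i → ⁅B (DHVIdx.d i), v⁆ = 0 ∧ ⁅B (DHVIdx.h i), v⁆ = 0)
    {a : ℤ} (ha : n < a) {x : g} (hx : x ∈ dhvFiltration B a) : ⁅x, v⁆ = 0 := by
  induction hx using span_induction with
  | mem x hx =>
    obtain ⟨i, hi, rfl⟩ := hx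
    cases i with
    | d m => exact (hv m (ha.trans_le hi).le).1
    | h m => exact (hv m (ha.trans_le hi).le).2
    | c => exact absurd (ha.trans_le hi) (Int.natCast_nonneg n).not_gt
  | zero => exact zero_lie v
  | add x y _ _ hx hy => rw [add_lie, hx, hy, add_zero]
  | smul r x _ hx => rw [smul_lie, hx, smul_zero]

end DHV

/-- Every simple restricted `L`-module has the property that, for all
sufficiently large `t`, the actions of `d_t` and `h_t` are locally nilpotent. -/
theorem dhv_restricted_locally_nilpotent
 {g : Type*} [LieRing g] [LieAlgebra ℂ g]
    (B : Module.Basis DHVIdx ℂ g)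
    (hdd : ∀ m n : ℤ, ⁅B (DHVIdx.d m), B (DHVIdx.d n)⁆ =
      ((m - n : ℤ) : ℂ) • B (DHVIdx.d (m + n)) +
      ((m - n : ℤ) : ℂ) • B (DHVIdx.h (m + n)) +
      (if m + n = 0 then ((m : ℂ) ^ 3 - (m : ℂ)) / 12 else 0) • B DHVIdx.c)
    (hdh : ∀ m n : ℤ, ⁅B (DHVIdx.d m), B (DHVIdx.h n)⁆ =
      ((-n : ℤ) : ℂ) • B (DHVIdx.h (m + n)))
    (hhh : ∀ m n : ℤ, ⁅B (DHVIdx.h m), B (DHVIdx.h n)⁆ = 0)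
    (hcen : ∀ x : g, ⁅x, B DHVIdx.c⁆ = 0)
    (S : Type*) [AddCommGroup S] [Module ℂ S] [LieRingModule g S]
    [LieModule ℂ g S]
    (hsimple : ∀ N : LieSubmodule ℂ g S, N = ⊥ ∨ N = ⊤) (hnt : Nontrivial S)
    (hres : ∀ s : S, ∃ n : ℕ, ∀ i : ℤ, (n : ℤ) ≤ i →
      ⁅B (DHVIdx.d i), s⁆ = 0 ∧ ⁅B (DHVIdx.h i), s⁆ = 0) :
    ∃ s₀ : ℕ, ∀ t : ℤ, (s₀ : ℤ) ≤ t → ∀ m : S,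
      (∃ n : ℕ, (fun w : S => ⁅B (DHVIdx.d t), w⁆)^[n] m = 0) ∧
      (∃ n : ℕ, (fun w : S => ⁅B (DHVIdx.h t), w⁆)^[n] m = 0) := by
  obtain ⟨w, hw0⟩ := exists_ne (0 : S)
  obtain ⟨n, hn⟩ := hres w
  have hB := lie_basis_mem_dhvFiltration B hdd hdh hhh hcen
  have hnil (t : ℤ) (ht : (n : ℤ) < t) (i : DHVIdx) (hi : i.deg = t) (m : S) :
      ∃ k : ℕ, (fun v : S => ⁅B i, v⁆)^[k] m = 0 := by
    obtain ⟨k, hk⟩ := exists_toEnd_pow_apply_eq_zero (bracketCompatible_dhvFiltration B hB)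
      (exists_mem_dhvFiltration B) (Int.natCast_nonneg n) hsimple hw0
      (fun _ ha _ hx => lie_eq_zero_of_mem_dhvFiltration B hn ha hx) ht
      (hi ▸ basis_mem_dhvFiltration B i) m
    exact ⟨k, by rwa [Module.End.pow_apply] at hk⟩
  exact ⟨n + 1, fun t ht m => ⟨hnil t (by omega) (.d t) rfl m, hnil t (by omega) (.h t) rfl m⟩⟩
end
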